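/- The map sending a permutation π of length n avoiding 2431, 4231, 1432, 4132 to the word w_1...w_{n-1}, where w_i records either the value p(π|_{[i+1]}) if nonzero, or B/E according to whether i+1 is at the beginning/end of π|_{[i+1]}, is injective. -/
import Mathlib


def Contains {n k : ℕ} (τ : Equiv.Perm (Fin n)) (p : Fin k → ℕ) : Prop :=
  ∃ f : Fin k → Fin n, StrictMono f ∧ ∀ a b, p a < p b ↔ τ (f a) < τ (f b)

def AvoidsPat {n k : ℕ} (τ : Equiv.Perm (Fin n)) (p : Fin k → ℕ) : Prop := ¬ Contains τ p

lemma card_valFilter {n : ℕ} (π : Equiv.Perm (Fin n)) (i : ℕ) (h : i ≤ n) :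
    (Finset.univ.filter fun q : Fin n => (π q : ℕ) < i).card = i := by
  classical
  have e : (Finset.univ.filter fun q : Fin n => (π q : ℕ) < i) =
      (Finset.univ.filter fun v : Fin n => (v : ℕ) < i).map π.symm.toEmbedding := by
    ext q
    simp only [Finset.mem_filter, Finset.mem_map, Finset.mem_univ, true_and,
      Equiv.coe_toEmbedding]
    constructor
    · intro hq; exact ⟨π q, hq, by simp⟩
    · rintro ⟨v, hv, rfl⟩; simpa using hv
  have e2 : ((Finset.univ.filter fun v : Fin n => (v : ℕ) < i).map Fin.valEmbedding) =
      Finset.range i := by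
    ext x
    simp only [Finset.mem_map, Finset.mem_filter, Finset.mem_univ, true_and,
      Fin.valEmbedding_apply, Finset.mem_range]
    constructor
    · rintro ⟨v, hv, rfl⟩; exact hv
    · intro hx; exact ⟨⟨x, lt_of_lt_of_le hx h⟩, hx, rfl⟩
  rw [e, Finset.card_map, ← Finset.card_map Fin.valEmbedding, e2, Finset.card_range]

/-- `restrictPerm π i h` is the permutation of `Fin i` order-isomorphic to the subsequence
of `π` consisting of the entries with values in `{0, …, i-1}` (i.e. the pattern `π|_[i]`). -/
noncomputable def restrictPerm {n : ℕ} (π : Equiv.Perm (Fin n)) (i : ℕ) (h : i ≤ n) :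
    Equiv.Perm (Fin i) :=
  Equiv.ofBijective
    (fun a =>
      ⟨(π ((Finset.univ.filter fun q : Fin n => (π q : ℕ) < i).orderIsoOfFin
            (card_valFilter π i h) a) : ℕ), by
        have hm := ((Finset.univ.filter fun q : Fin n => (π q : ℕ) < i).orderIsoOfFin
            (card_valFilter π i h) a).2
        exact (Finset.mem_filter.mp hm).2⟩)
    (Finite.injective_iff_bijective.mp (by
      intro a b hab
      have h1 := congrArg Fin.val hab
      have h2 := π.injective (Fin.val_injective h1)
      have h3 := Subtype.coe_injective h2
      exact ((Finset.univ.filter fun q : Fin n => (π q : ℕ) < i).orderIsoOfFin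
          (card_valFilter π i h)).injective h3))


/-- `pVal σ` is the maximal 1-based position `i` such that there are `j < i < k` with
`σ j < σ i` and `σ k < σ i`, and `0` if no such position exists. -/
noncomputable def pVal {m : ℕ} (σ : Equiv.Perm (Fin m)) : ℕ :=
  sSup {v : ℕ | ∃ j i k : Fin m, j < i ∧ i < k ∧ σ j < σ i ∧ σ k < σ i ∧ v = (i : ℕ) + 1}

/-- The code letter associated with the restriction `σ = π|_[i+1]`: it is the integer
`pVal σ` when this is nonzero, the letter `B` (`Sum.inl true`) if the maximal entry of `σ`
is at the beginning, and the letter `E` (`Sum.inl false`) if it is at the end. -/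
noncomputable def codeLetter {k : ℕ} (σ : Equiv.Perm (Fin (k + 2))) : Bool ⊕ ℕ :=
  if pVal σ ≠ 0 then Sum.inr (pVal σ)
  else if σ 0 = Fin.last (k + 1) then Sum.inl true
  else Sum.inl false

section Aux
open Finset

variable {n : ℕ}

noncomputable def rEmb (π : Equiv.Perm (Fin n)) (i : ℕ) (h : i ≤ n) : Fin i ↪o Fin n :=
  (Finset.univ.filter fun q : Fin n => (π q : ℕ) < i).orderEmbOfFin (card_valFilter π i h)

lemma rEmb_lt (π : Equiv.Perm (Fin n)) (i : ℕ) (h : i ≤ n) (a : Fin i) :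
    (π (rEmb π i h a) : ℕ) < i := by
  have hm := Finset.orderEmbOfFin_mem _ (card_valFilter π i h) a
  exact (Finset.mem_filter.mp hm).2

lemma restrictPerm_val (π : Equiv.Perm (Fin n)) (i : ℕ) (h : i ≤ n) (a : Fin i) :
    ((restrictPerm π i h) a : ℕ) = (π (rEmb π i h a) : ℕ) := rfl

lemma rEmb_surj (π : Equiv.Perm (Fin n)) (i : ℕ) (h : i ≤ n) (q : Fin n)
    (hq : (π q : ℕ) < i) : ∃ a, rEmb π i h a = q := by
  have hmem : q ∈ (Finset.univ.filter fun q : Fin n => (π q : ℕ) < i) := by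
    simp [hq]
  refine ⟨((Finset.univ.filter fun q : Fin n => (π q : ℕ) < i).orderIsoOfFin
      (card_valFilter π i h)).symm ⟨q, hmem⟩, ?_⟩
  show (((Finset.univ.filter fun q : Fin n => (π q : ℕ) < i).orderIsoOfFin
      (card_valFilter π i h)) _ : Fin n) = q
  rw [OrderIso.apply_symm_apply]

lemma strictMono_val_le {k : ℕ} (f : Fin k → Fin n) (hf : StrictMono f) (a : Fin k) :
    (a : ℕ) ≤ (f a : ℕ) := by
  suffices H : ∀ v (hv : v < k), v ≤ (f ⟨v, hv⟩ : ℕ) from H a.1 a.2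
  intro v
  induction v with
  | zero => intro hv; exact Nat.zero_le _
  | succ i ih =>
    intro hv
    have hik : i < k := by omega
    have h1 : (⟨i, hik⟩ : Fin k) < ⟨i + 1, hv⟩ := by simp [Fin.lt_def]
    have h2 := hf h1
    have h3 := ih hik
    rw [Fin.lt_def] at h2
    omega

lemma restrictPerm_full (π : Equiv.Perm (Fin n)) (h : n ≤ n) :
    restrictPerm π n h = π := by
  have he : ∀ a : Fin n, rEmb π n h a = a := by
    have := Finset.orderEmbOfFin_unique (f := fun a : Fin n => a)
      (card_valFilter π n h) (fun x => by simp) strictMono_id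
    intro a; exact (congrFun this a).symm
  ext q
  rw [show ((restrictPerm π n h) q : ℕ) = (π (rEmb π n h q) : ℕ) from rfl, he]

lemma restrictPerm_trans (π : Equiv.Perm (Fin n)) (i j : ℕ) (h1 : i ≤ n) (h2 : j ≤ i)
    (h3 : j ≤ n) :
    restrictPerm (restrictPerm π i h1) j h2 = restrictPerm π j h3 := by
  set σ := restrictPerm π i h1 with hσ
  have he : ∀ a : Fin j, rEmb π i h1 (rEmb σ j h2 a) = rEmb π j h3 a := by
    have := Finset.orderEmbOfFin_unique
      (f := fun a : Fin j => rEmb π i h1 (rEmb σ j h2 a)) (card_valFilter π j h3)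
      (fun x => by
        simp only [Finset.mem_filter, Finset.mem_univ, true_and]
        have := rEmb_lt σ j h2 x
        rw [restrictPerm_val] at this
        exact this)
      ((rEmb π i h1).strictMono.comp (rEmb σ j h2).strictMono)
    intro a; exact congrFun this a
  ext q
  rw [show ((restrictPerm σ j h2) q : ℕ) = (σ (rEmb σ j h2 q) : ℕ) from rfl,
    restrictPerm_val, restrictPerm_val, he]

lemma contains_restrict {k : ℕ} (π : Equiv.Perm (Fin n)) (i : ℕ) (h : i ≤ n)
    (p : Fin k → ℕ) (hc : Contains (restrictPerm π i h) p) : Contains π p := by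
  obtain ⟨f, hf, hp⟩ := hc
  refine ⟨fun a => rEmb π i h (f a), (rEmb π i h).strictMono.comp hf, fun a b => ?_⟩
  rw [hp a b, Fin.lt_def, Fin.lt_def, ← restrictPerm_val, ← restrictPerm_val]

def Av4 {N : ℕ} (π : Equiv.Perm (Fin N)) : Prop :=
  AvoidsPat π ![2,4,3,1] ∧ AvoidsPat π ![4,2,3,1] ∧
  AvoidsPat π ![1,4,3,2] ∧ AvoidsPat π ![4,1,3,2]

lemma av4_restrict (π : Equiv.Perm (Fin n)) (i : ℕ) (h : i ≤ n) (h4 : Av4 π) :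
    Av4 (restrictPerm π i h) := by
  obtain ⟨a1, a2, a3, a4⟩ := h4
  exact ⟨fun hc => a1 (contains_restrict π i h _ hc),
    fun hc => a2 (contains_restrict π i h _ hc),
    fun hc => a3 (contains_restrict π i h _ hc),
    fun hc => a4 (contains_restrict π i h _ hc)⟩

end Aux

section Aux2
variable {n : ℕ}

lemma contains4 (π : Equiv.Perm (Fin n)) {a b c d : Fin n}
    (hab : a < b) (hbc : b < c) (hcd : c < d) (p : Fin 4 → ℕ)
    (hp : ∀ x y : Fin 4, p x < p y ↔ π (![a,b,c,d] x) < π (![a,b,c,d] y)) :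
    Contains π p := by
  refine ⟨![a,b,c,d], ?_, hp⟩
  have h1 : (a:ℕ) < b := hab
  have h2 : (b:ℕ) < c := hbc
  have h3 : (c:ℕ) < d := hcd
  intro x y hxy
  fin_cases x <;> fin_cases y <;>
    first
    | exact absurd hxy (by decide)
    | (simp only [Fin.zero_eta, Fin.mk_one, Fin.reduceFinMk,
        Matrix.cons_val_zero, Matrix.cons_val_one, Matrix.head_cons, Matrix.cons_val_two,
        Matrix.tail_cons, Matrix.cons_val_three, Matrix.head_fin_const, Fin.lt_def] <;> omega)

lemma no_high_before (π : Equiv.Perm (Fin n)) (h4 : Av4 π) {t j i k : Fin n}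
    (htj : t ≠ j) (hti : t < i) (hji : j < i) (hik : i < k)
    (h1 : π j < π i) (h2 : π k < π i) (h3 : π i < π t) : False := by
  obtain ⟨a1, a2, a3, a4⟩ := h4
  have hjk : j ≠ k := ne_of_lt (hji.trans hik)
  have hv1 : (π j : ℕ) < π i := h1
  have hv2 : (π k : ℕ) < π i := h2
  have hv3 : (π i : ℕ) < π t := h3
  have hvjk : (π j : ℕ) ≠ (π k : ℕ) := fun hh =>
    hjk (π.injective (Fin.val_injective hh))
  rcases lt_or_gt_of_ne htj with hlt | hgt
  · -- t < j : patterns 4132 / 4231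
    rcases Nat.lt_or_ge (π j : ℕ) (π k : ℕ) with hc | hc
    · exact a4 (contains4 π hlt hji hik ![4,1,3,2] (fun x y => by
        fin_cases x <;> fin_cases y <;>
          simp only [Fin.zero_eta, Fin.mk_one, Fin.reduceFinMk, Matrix.cons_val_zero,
            Matrix.cons_val_one, Matrix.head_cons, Matrix.cons_val_two, Matrix.tail_cons,
            Matrix.cons_val_three, Matrix.head_fin_const, Fin.lt_def] <;> omega))
    · exact a2 (contains4 π hlt hji hik ![4,2,3,1] (fun x y => by
        fin_cases x <;> fin_cases y <;>
          simp only [Fin.zero_eta, Fin.mk_one, Fin.reduceFinMk, Matrix.cons_val_zero,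
            Matrix.cons_val_one, Matrix.head_cons, Matrix.cons_val_two, Matrix.tail_cons,
            Matrix.cons_val_three, Matrix.head_fin_const, Fin.lt_def] <;> omega))
  · -- j < t : patterns 1432 / 2431
    rcases Nat.lt_or_ge (π j : ℕ) (π k : ℕ) with hc | hc
    · exact a3 (contains4 π hgt hti hik ![1,4,3,2] (fun x y => by
        fin_cases x <;> fin_cases y <;>
          simp only [Fin.zero_eta, Fin.mk_one, Fin.reduceFinMk, Matrix.cons_val_zero,
            Matrix.cons_val_one, Matrix.head_cons, Matrix.cons_val_two, Matrix.tail_cons,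
            Matrix.cons_val_three, Matrix.head_fin_const, Fin.lt_def] <;> omega))
    · exact a1 (contains4 π hgt hti hik ![2,4,3,1] (fun x y => by
        fin_cases x <;> fin_cases y <;>
          simp only [Fin.zero_eta, Fin.mk_one, Fin.reduceFinMk, Matrix.cons_val_zero,
            Matrix.cons_val_one, Matrix.head_cons, Matrix.cons_val_two, Matrix.tail_cons,
            Matrix.cons_val_three, Matrix.head_fin_const, Fin.lt_def] <;> omega))

end Aux2

section Aux3
variable {k : ℕ}

lemma pVal_def {m : ℕ} (σ : Equiv.Perm (Fin m)) :
    pVal σ = sSup {v : ℕ | ∃ j i k : Fin m,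
      j < i ∧ i < k ∧ σ j < σ i ∧ σ k < σ i ∧ v = (i : ℕ) + 1} := rfl

lemma pVal_bdd {m : ℕ} (σ : Equiv.Perm (Fin m)) :
    BddAbove {v : ℕ | ∃ j i k : Fin m,
      j < i ∧ i < k ∧ σ j < σ i ∧ σ k < σ i ∧ v = (i : ℕ) + 1} := by
  refine ⟨m, ?_⟩
  rintro v ⟨j, i, k', _, _, _, _, rfl⟩
  have := i.isLt; omega

lemma eq_t_of_apply_last (π : Equiv.Perm (Fin (k+2))) (x : Fin (k+2))
    (hx : π x = Fin.last (k+1)) : x = π.symm (Fin.last (k+1)) := by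
  rw [← hx, Equiv.symm_apply_apply]

lemma apply_lt_last (π : Equiv.Perm (Fin (k+2))) (x : Fin (k+2))
    (hx : x ≠ π.symm (Fin.last (k+1))) : (π x : ℕ) < k + 1 := by
  have h1 : π x ≠ Fin.last (k+1) := fun hh => hx (eq_t_of_apply_last π x hh)
  have h2 : (π x : ℕ) ≤ k + 1 := Fin.le_last (π x)
  have h3 : (π x : ℕ) ≠ k + 1 := fun hh => h1 (Fin.ext (by rw [hh, Fin.val_last]))
  omega

lemma cand_le_t (π : Equiv.Perm (Fin (k+2))) (h4 : Av4 π) {j i k' : Fin (k+2)}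
    (hji : j < i) (hik : i < k') (h1 : π j < π i) (h2 : π k' < π i) :
    (i : ℕ) ≤ (π.symm (Fin.last (k+1)) : ℕ) := by
  set t := π.symm (Fin.last (k+1)) with htdef
  have hπt : π t = Fin.last (k+1) := π.apply_symm_apply _
  by_contra hcon
  have hti : t < i := by rw [Fin.lt_def]; omega
  have htj : t ≠ j := by
    intro hh
    have hjl : π j = Fin.last (k+1) := by rw [← hh, hπt]
    have hlt := lt_of_lt_of_le h1 (Fin.le_last (π i))
    rw [hjl] at hlt
    exact lt_irrefl _ hlt
  have hne : π i < π t := by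
    rw [hπt]
    refine lt_of_le_of_ne (Fin.le_last _) fun hh => ?_
    have : i = t := eq_t_of_apply_last π i hh
    exact absurd hti (by rw [this]; exact lt_irrefl _)
  exact no_high_before π h4 htj hti hji hik h1 h2 hne

lemma pVal_t_zero (π : Equiv.Perm (Fin (k+2))) (h4 : Av4 π)
    (ht : (π.symm (Fin.last (k+1)) : ℕ) = 0) : pVal π = 0 := by
  have hempty : {v : ℕ | ∃ j i k' : Fin (k+2),
      j < i ∧ i < k' ∧ π j < π i ∧ π k' < π i ∧ v = (i : ℕ) + 1} = ∅ := by
    ext v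
    simp only [Set.mem_setOf_eq, Set.mem_empty_iff_false, iff_false]
    rintro ⟨j, i, k', hji, hik, h1, h2, rfl⟩
    have hle := cand_le_t π h4 hji hik h1 h2
    have : (j : ℕ) < i := hji
    omega
  rw [pVal_def, hempty, csSup_empty]; rfl

lemma pVal_t_mid (π : Equiv.Perm (Fin (k+2))) (h4 : Av4 π)
    (ht0 : 0 < (π.symm (Fin.last (k+1)) : ℕ))
    (ht1 : (π.symm (Fin.last (k+1)) : ℕ) < k+1) :
    pVal π = (π.symm (Fin.last (k+1)) : ℕ) + 1 := by
  have hπt : π (π.symm (Fin.last (k+1))) = Fin.last (k+1) := π.apply_symm_apply _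
  rw [pVal_def]
  apply le_antisymm
  · apply csSup_le'
    rintro v ⟨j, i, k', hji, hik, h1, h2, rfl⟩
    have := cand_le_t π h4 hji hik h1 h2
    omega
  · apply le_csSup (pVal_bdd π)
    refine ⟨0, π.symm (Fin.last (k+1)), Fin.last (k+1), ?_, ?_, ?_, ?_, rfl⟩
    · rw [Fin.lt_def]; exact ht0
    · rw [Fin.lt_def, Fin.val_last]; exact ht1
    · rw [hπt]
      refine lt_of_le_of_ne (Fin.le_last _) fun hh => ?_
      have h0 := eq_t_of_apply_last π 0 hh
      rw [← h0] at ht0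
      simp at ht0
    · rw [hπt]
      refine lt_of_le_of_ne (Fin.le_last _) fun hh => ?_
      have h0 := eq_t_of_apply_last π (Fin.last (k+1)) hh
      rw [← h0, Fin.val_last] at ht1
      omega

lemma pVal_restrict_le (π : Equiv.Perm (Fin (k+2))) (h4 : Av4 π)
    (hk2 : k+1 ≤ k+2)
    (ht1 : (π.symm (Fin.last (k+1)) : ℕ) < k+1) :
    pVal (restrictPerm π (k+1) hk2) ≤ (π.symm (Fin.last (k+1)) : ℕ) := by
  have hπt : π (π.symm (Fin.last (k+1))) = Fin.last (k+1) := π.apply_symm_apply _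
  rw [pVal_def]
  apply csSup_le'
  rintro v ⟨aj, ai, ak, hji, hik, h1, h2, rfl⟩
  have hmap : ∀ x y : Fin (k+1),
      (restrictPerm π (k+1) hk2) x < (restrictPerm π (k+1) hk2) y →
        π (rEmb π (k+1) hk2 x) < π (rEmb π (k+1) hk2 y) := by
    intro x y hxy
    rw [Fin.lt_def] at hxy
    rw [restrictPerm_val π (k+1) hk2 x, restrictPerm_val π (k+1) hk2 y] at hxy
    exact hxy
  have hj := hmap _ _ h1
  have hk' := hmap _ _ h2
  have hle := cand_le_t π h4 ((rEmb π (k+1) hk2).strictMono hji)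
    ((rEmb π (k+1) hk2).strictMono hik) hj hk'
  have hvle : (ai : ℕ) ≤ (rEmb π (k+1) hk2 ai : ℕ) :=
    strictMono_val_le (fun a => rEmb π (k+1) hk2 a) (rEmb π (k+1) hk2).strictMono ai
  have hnet : (rEmb π (k+1) hk2 ai : ℕ) ≠ (π.symm (Fin.last (k+1)) : ℕ) := by
    intro hh
    have heq : rEmb π (k+1) hk2 ai = π.symm (Fin.last (k+1)) := Fin.val_injective hh
    have h1' := rEmb_lt π (k+1) hk2 ai
    rw [heq, hπt, Fin.val_last] at h1'
    omega
  omega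

lemma rEmb_last_castSucc (π : Equiv.Perm (Fin (k+2))) (hk2 : k+1 ≤ k+2)
    (ht : (π.symm (Fin.last (k+1)) : ℕ) = k+1) (a : Fin (k+1)) :
    (rEmb π (k+1) hk2 a : Fin (k+2)) = Fin.castSucc a := by
  have := Finset.orderEmbOfFin_unique (f := fun a : Fin (k+1) => Fin.castSucc a)
    (card_valFilter π (k+1) hk2)
    (fun x => by
      simp only [Finset.mem_filter, Finset.mem_univ, true_and]
      apply apply_lt_last
      intro hh
      have hval : ((Fin.castSucc x : Fin (k+2)) : ℕ) = k+1 := by rw [hh, ht]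
      have hlt := x.isLt
      rw [Fin.coe_castSucc] at hval
      omega)
    (fun _ _ h => Fin.castSucc_lt_castSucc_iff.mpr h)
  exact (congrFun this a).symm

lemma pVal_t_last (π : Equiv.Perm (Fin (k+2))) (hk2 : k+1 ≤ k+2)
    (ht : (π.symm (Fin.last (k+1)) : ℕ) = k+1) :
    pVal π = pVal (restrictPerm π (k+1) hk2) := by
  have hπt : π (π.symm (Fin.last (k+1))) = Fin.last (k+1) := π.apply_symm_apply _
  have hmap : ∀ x y : Fin (k+1), (restrictPerm π (k+1) hk2) x < (restrictPerm π (k+1) hk2) y ↔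
      π (rEmb π (k+1) hk2 x) < π (rEmb π (k+1) hk2 y) := by
    intro x y
    rw [Fin.lt_def, Fin.lt_def,
      restrictPerm_val π (k+1) hk2 x, restrictPerm_val π (k+1) hk2 y]
  have hEval : ∀ a : Fin (k+1), (rEmb π (k+1) hk2 a : ℕ) = (a : ℕ) := by
    intro a; rw [rEmb_last_castSucc π hk2 ht a, Fin.coe_castSucc]
  rw [pVal_def, pVal_def]
  congr 1
  ext v
  simp only [Set.mem_setOf_eq]
  constructor
  · rintro ⟨j, i, k', hji, hik, h1, h2, rfl⟩
    have hkt : k' ≠ π.symm (Fin.last (k+1)) := by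
      intro hh
      rw [hh, hπt] at h2
      exact absurd (h2.trans_le (Fin.le_last _)) (lt_irrefl _)
    have hit : i ≠ π.symm (Fin.last (k+1)) := by
      intro hh
      have hik' : (i : ℕ) < k' := hik
      have hk'lt := k'.isLt
      have : (i : ℕ) = k + 1 := by rw [hh, ht]
      omega
    have hjt : j ≠ π.symm (Fin.last (k+1)) := by
      intro hh
      rw [hh, hπt] at h1
      exact absurd (h1.trans_le (Fin.le_last _)) (lt_irrefl _)
    have hπi : (π i : ℕ) < k+1 := apply_lt_last π i hit
    have hπj : (π j : ℕ) < k+1 := apply_lt_last π j hjt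
    have hπk : (π k' : ℕ) < k+1 := apply_lt_last π k' hkt
    obtain ⟨aj, haj⟩ := rEmb_surj π (k+1) hk2 j hπj
    obtain ⟨ai, hai⟩ := rEmb_surj π (k+1) hk2 i hπi
    obtain ⟨ak, hak⟩ := rEmb_surj π (k+1) hk2 k' hπk
    refine ⟨aj, ai, ak, ?_, ?_, ?_, ?_, ?_⟩
    · exact (rEmb π (k+1) hk2).strictMono.lt_iff_lt.mp (by rw [haj, hai]; exact hji)
    · exact (rEmb π (k+1) hk2).strictMono.lt_iff_lt.mp (by rw [hak, hai]; exact hik)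
    · rw [hmap, haj, hai]; exact h1
    · rw [hmap, hak, hai]; exact h2
    · rw [← hai, hEval]
  · rintro ⟨aj, ai, ak, hji, hik, h1, h2, rfl⟩
    refine ⟨rEmb π (k+1) hk2 aj, rEmb π (k+1) hk2 ai, rEmb π (k+1) hk2 ak,
      (rEmb π (k+1) hk2).strictMono hji, (rEmb π (k+1) hk2).strictMono hik,
      (hmap _ _).mp h1, (hmap _ _).mp h2, by rw [hEval]⟩

lemma first_eq_last_iff (π : Equiv.Perm (Fin (k+2))) :
    π 0 = Fin.last (k+1) ↔ (π.symm (Fin.last (k+1)) : ℕ) = 0 := by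
  constructor
  · intro h
    have := eq_t_of_apply_last π 0 h
    rw [← this]; rfl
  · intro h
    have : π.symm (Fin.last (k+1)) = 0 := Fin.ext h
    rw [← this, Equiv.apply_symm_apply]

end Aux3

section Aux4
variable {k : ℕ}

lemma codeLetter_of_t_zero (π : Equiv.Perm (Fin (k+2))) (h4 : Av4 π)
    (ht : (π.symm (Fin.last (k+1)) : ℕ) = 0) : codeLetter π = Sum.inl true := by
  have h0 := pVal_t_zero π h4 ht
  have h1 := (first_eq_last_iff π).mpr ht
  rw [codeLetter, h0, if_neg (by simp), if_pos h1]

lemma codeLetter_of_t_mid (π : Equiv.Perm (Fin (k+2))) (h4 : Av4 π)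
    (ht0 : 0 < (π.symm (Fin.last (k+1)) : ℕ))
    (ht1 : (π.symm (Fin.last (k+1)) : ℕ) < k+1) :
    codeLetter π = Sum.inr ((π.symm (Fin.last (k+1)) : ℕ) + 1) := by
  rw [codeLetter, pVal_t_mid π h4 ht0 ht1, if_pos (by omega)]

lemma codeLetter_of_t_last (π : Equiv.Perm (Fin (k+2))) (hk2 : k+1 ≤ k+2)
    (ht : (π.symm (Fin.last (k+1)) : ℕ) = k+1) :
    codeLetter π = if pVal (restrictPerm π (k+1) hk2) ≠ 0
      then Sum.inr (pVal (restrictPerm π (k+1) hk2)) else Sum.inl false := by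
  have h0 : π 0 ≠ Fin.last (k+1) := by
    intro hh
    have := (first_eq_last_iff π).mp hh
    omega
  rw [codeLetter, pVal_t_last π hk2 ht]
  by_cases h : pVal (restrictPerm π (k+1) hk2) ≠ 0
  · rw [if_pos h, if_pos h]
  · rw [if_neg h, if_neg h, if_neg h0]

lemma t_val_eq (π τ : Equiv.Perm (Fin (k+2))) (h4π : Av4 π) (h4τ : Av4 τ)
    (hk2 : k+1 ≤ k+2)
    (hres : restrictPerm π (k+1) hk2 = restrictPerm τ (k+1) hk2)
    (hcl : codeLetter π = codeLetter τ) :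
    (π.symm (Fin.last (k+1)) : ℕ) = (τ.symm (Fin.last (k+1)) : ℕ) := by
  have hpres : pVal (restrictPerm π (k+1) hk2) = pVal (restrictPerm τ (k+1) hk2) :=
    congrArg pVal hres
  have haπ : (π.symm (Fin.last (k+1)) : ℕ) < k+2 := (π.symm (Fin.last (k+1))).isLt
  have haτ : (τ.symm (Fin.last (k+1)) : ℕ) < k+2 := (τ.symm (Fin.last (k+1))).isLt
  rcases Nat.lt_or_ge (π.symm (Fin.last (k+1)) : ℕ) 1 with hπ0 | hπ1
  · -- tπ = 0
    have hπz : (π.symm (Fin.last (k+1)) : ℕ) = 0 := by omega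
    rw [codeLetter_of_t_zero π h4π hπz] at hcl
    rcases Nat.lt_or_ge (τ.symm (Fin.last (k+1)) : ℕ) 1 with hτ0 | hτ1
    · omega
    · exfalso
      rcases Nat.lt_or_ge (τ.symm (Fin.last (k+1)) : ℕ) (k+1) with hτm | hτm
      · rw [codeLetter_of_t_mid τ h4τ (by omega) hτm] at hcl; exact absurd hcl (by simp)
      · have hτl : (τ.symm (Fin.last (k+1)) : ℕ) = k+1 := by omega
        rw [codeLetter_of_t_last τ hk2 hτl] at hcl
        by_cases h : pVal (restrictPerm τ (k+1) hk2) ≠ 0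
        · rw [if_pos h] at hcl; exact absurd hcl (by simp)
        · rw [if_neg h] at hcl; simp at hcl
  · -- tπ ≥ 1
    rcases Nat.lt_or_ge (π.symm (Fin.last (k+1)) : ℕ) (k+1) with hπm | hπm
    · -- tπ mid
      rw [codeLetter_of_t_mid π h4π (by omega) hπm] at hcl
      rcases Nat.lt_or_ge (τ.symm (Fin.last (k+1)) : ℕ) 1 with hτ0 | hτ1
      · exfalso
        rw [codeLetter_of_t_zero τ h4τ (by omega)] at hcl; exact absurd hcl (by simp)
      · rcases Nat.lt_or_ge (τ.symm (Fin.last (k+1)) : ℕ) (k+1) with hτm | hτm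
        · rw [codeLetter_of_t_mid τ h4τ (by omega) hτm] at hcl
          have := Sum.inr_injective hcl; omega
        · exfalso
          have hτl : (τ.symm (Fin.last (k+1)) : ℕ) = k+1 := by omega
          rw [codeLetter_of_t_last τ hk2 hτl] at hcl
          by_cases h : pVal (restrictPerm τ (k+1) hk2) ≠ 0
          · rw [if_pos h] at hcl
            have heq := Sum.inr_injective hcl
            have hle := pVal_restrict_le π h4π hk2 hπm
            rw [hpres] at hle
            omega
          · rw [if_neg h] at hcl; exact absurd hcl (by simp)
    · -- tπ = k+1
      have hπl : (π.symm (Fin.last (k+1)) : ℕ) = k+1 := by omega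
      rw [codeLetter_of_t_last π hk2 hπl] at hcl
      rcases Nat.lt_or_ge (τ.symm (Fin.last (k+1)) : ℕ) 1 with hτ0 | hτ1
      · exfalso
        rw [codeLetter_of_t_zero τ h4τ (by omega)] at hcl
        by_cases h : pVal (restrictPerm π (k+1) hk2) ≠ 0
        · rw [if_pos h] at hcl; exact absurd hcl (by simp)
        · rw [if_neg h] at hcl; simp at hcl
      · rcases Nat.lt_or_ge (τ.symm (Fin.last (k+1)) : ℕ) (k+1) with hτm | hτm
        · exfalso
          rw [codeLetter_of_t_mid τ h4τ (by omega) hτm] at hcl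
          by_cases h : pVal (restrictPerm π (k+1) hk2) ≠ 0
          · rw [if_pos h] at hcl
            have heq := Sum.inr_injective hcl
            have hle := pVal_restrict_le τ h4τ hk2 hτm
            rw [← hpres] at hle
            omega
          · rw [if_neg h] at hcl; exact absurd hcl (by simp)
        · omega

lemma perm_eq_of_parts (π τ : Equiv.Perm (Fin (k+2))) (hk2 : k+1 ≤ k+2)
    (hres : restrictPerm π (k+1) hk2 = restrictPerm τ (k+1) hk2)
    (ht : (π.symm (Fin.last (k+1)) : ℕ) = (τ.symm (Fin.last (k+1)) : ℕ)) : π = τ := by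
  have htfin : π.symm (Fin.last (k+1)) = τ.symm (Fin.last (k+1)) := Fin.ext ht
  have hEne : ∀ x : Fin (k+1), rEmb π (k+1) hk2 x ≠ π.symm (Fin.last (k+1)) := by
    intro x hh
    have h1 := rEmb_lt π (k+1) hk2 x
    rw [hh, π.apply_symm_apply, Fin.val_last] at h1
    omega
  have hEe : ∀ x : Fin (k+1), rEmb π (k+1) hk2 x = rEmb τ (k+1) hk2 x := by
    have := Finset.orderEmbOfFin_unique (f := fun a : Fin (k+1) => rEmb π (k+1) hk2 a)
      (card_valFilter τ (k+1) hk2)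
      (fun x => by
        simp only [Finset.mem_filter, Finset.mem_univ, true_and]
        apply apply_lt_last
        rw [← htfin]
        exact hEne x)
      (rEmb π (k+1) hk2).strictMono
    intro x; exact congrFun this x
  apply Equiv.ext
  intro q
  by_cases hq : q = π.symm (Fin.last (k+1))
  · rw [hq, π.apply_symm_apply, htfin, τ.apply_symm_apply]
  · have hlt : (π q : ℕ) < k+1 := apply_lt_last π q hq
    obtain ⟨a, ha⟩ := rEmb_surj π (k+1) hk2 q hlt
    apply Fin.ext
    have e1 : (π q : ℕ) = ((restrictPerm π (k+1) hk2) a : ℕ) := by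
      rw [restrictPerm_val, ha]
    have e2 : ((restrictPerm τ (k+1) hk2) a : ℕ) = (τ q : ℕ) := by
      rw [restrictPerm_val, ← hEe, ha]
    rw [e1, hres, e2]

lemma keyD (π τ : Equiv.Perm (Fin (k+2))) (h4π : Av4 π) (h4τ : Av4 τ)
    (hk2 : k+1 ≤ k+2)
    (hres : restrictPerm π (k+1) hk2 = restrictPerm τ (k+1) hk2)
    (hcl : codeLetter π = codeLetter τ) : π = τ :=
  perm_eq_of_parts π τ hk2 hres (t_val_eq π τ h4π h4τ hk2 hres hcl)

end Aux4

theorem stmt13 {m : ℕ} (π τ : Equiv.Perm (Fin (m + 1)))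
    (hπ : AvoidsPat π ![2,4,3,1] ∧ AvoidsPat π ![4,2,3,1] ∧
          AvoidsPat π ![1,4,3,2] ∧ AvoidsPat π ![4,1,3,2])
    (hτ : AvoidsPat τ ![2,4,3,1] ∧ AvoidsPat τ ![4,2,3,1] ∧
          AvoidsPat τ ![1,4,3,2] ∧ AvoidsPat τ ![4,1,3,2])
    (hw : ∀ i : Fin m,
      codeLetter (restrictPerm π ((i : ℕ) + 2) (Nat.succ_le_succ i.isLt)) =
      codeLetter (restrictPerm τ ((i : ℕ) + 2) (Nat.succ_le_succ i.isLt))) :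
    π = τ := by
  induction m with
  | zero =>
    apply Equiv.ext
    intro x
    exact (Fin.fin_one_eq_zero _).trans (Fin.fin_one_eq_zero _).symm
  | succ m ih =>
    have hk2 : m + 1 ≤ m + 2 := by omega
    have h4π : Av4 π := hπ
    have h4τ : Av4 τ := hτ
    have hres : restrictPerm π (m+1) hk2 = restrictPerm τ (m+1) hk2 := by
      apply ih (restrictPerm π (m+1) hk2) (restrictPerm τ (m+1) hk2)
        (av4_restrict π (m+1) hk2 h4π) (av4_restrict τ (m+1) hk2 h4τ)
      intro i
      rw [restrictPerm_trans π (m+1) ((i : ℕ) + 2) hk2 (Nat.succ_le_succ i.isLt)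
          (by omega),
        restrictPerm_trans τ (m+1) ((i : ℕ) + 2) hk2 (Nat.succ_le_succ i.isLt)
          (by omega)]
      exact hw ⟨(i : ℕ), by omega⟩
    have hcl := hw ⟨m, by omega⟩
    rw [restrictPerm_full π, restrictPerm_full τ] at hcl
    exact keyD π τ h4π h4τ hk2 hres hcl
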